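/- Lower bound for pseudo-copy differences: for row-stochastic matrices Π₁, Π₂ and γ ∈ (0,1), the difference Δ' = P_γ(Π₁) − P_γ(Π₂) satisfies ‖Δ'‖_∞ ≥ (γ/(2−γ)²)·‖Π₁ − Π₂‖_∞, where P_γ(Π) = γ[I−(1−γ)Π]^{-1}Π and ‖·‖_∞ is the maximum-absolute-row-sum operator norm. -/

import Mathlib

open Finset Matrix

noncomputable def rowNorm {n : ℕ} (M : Matrix (Fin n) (Fin n) ℝ) : ℝ :=
  ⨆ i : Fin n, ∑ j, |M i j|

noncomputable def pseudoCopy {n : ℕ} (γ : ℝ) (M : Matrix (Fin n) (Fin n) ℝ) :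
    Matrix (Fin n) (Fin n) ℝ :=
  γ • ((1 - (1 - γ) • M)⁻¹ * M)

section aux

variable {n : ℕ}

lemma le_rowNorm_aux (M : Matrix (Fin n) (Fin n) ℝ) (i : Fin n) :
    ∑ j, |M i j| ≤ rowNorm M := by
  unfold rowNorm
  exact le_ciSup (f := fun i : Fin n => ∑ j, |M i j|) ((Set.finite_range _).bddAbove) i

lemma rowNorm_empty_aux (hn : IsEmpty (Fin n)) (M : Matrix (Fin n) (Fin n) ℝ) :
    rowNorm M = 0 := by
  unfold rowNorm
  rw [iSup_of_empty', Real.sSup_empty]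

lemma rowNorm_nonneg_aux (M : Matrix (Fin n) (Fin n) ℝ) : 0 ≤ rowNorm M := by
  cases isEmpty_or_nonempty (Fin n) with
  | inl h => rw [rowNorm_empty_aux h]
  | inr h =>
    obtain ⟨i⟩ := h
    exact le_trans (Finset.sum_nonneg fun j _ => abs_nonneg _) (le_rowNorm_aux M i)

lemma rowSum_mul_le_aux (A B : Matrix (Fin n) (Fin n) ℝ) (c : ℝ)
    (hc : ∀ k, ∑ j, |B k j| ≤ c) (i : Fin n) :
    ∑ j, |(A * B) i j| ≤ (∑ k, |A i k|) * c := by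
  calc ∑ j, |(A * B) i j| = ∑ j, |∑ k, A i k * B k j| := by
        simp [Matrix.mul_apply]
    _ ≤ ∑ j, ∑ k, |A i k * B k j| :=
        Finset.sum_le_sum fun j _ => Finset.abs_sum_le_sum_abs _ _
    _ = ∑ k, |A i k| * ∑ j, |B k j| := by
        rw [Finset.sum_comm]
        simp [abs_mul, Finset.mul_sum]
    _ ≤ ∑ k, |A i k| * c :=
        Finset.sum_le_sum fun k _ => mul_le_mul_of_nonneg_left (hc k) (abs_nonneg _)
    _ = (∑ k, |A i k|) * c := by rw [Finset.sum_mul]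

/-- Row sums of `1 - (1-γ)•M` are at most `2 - γ` for stochastic `M`. -/
lemma rowSum_A_le_aux (M : Matrix (Fin n) (Fin n) ℝ)
    (hpos : ∀ i j, 0 ≤ M i j) (hrow : ∀ i, ∑ j, M i j = 1)
    (γ : ℝ) (hγ1 : γ < 1) (i : Fin n) :
    ∑ j, |(1 - (1 - γ) • M) i j| ≤ 2 - γ := by
  have : ∀ j, |(1 - (1 - γ) • M) i j| ≤
      (if i = j then (1 : ℝ) else 0) + (1 - γ) * M i j := by
    intro j
    have h1 : (1 - (1 - γ) • M) i j
        = (if i = j then (1 : ℝ) else 0) - (1 - γ) * M i j := by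
      simp [Matrix.sub_apply, Matrix.one_apply, Matrix.smul_apply, smul_eq_mul]
    rw [h1]
    have h2 : 0 ≤ (1 - γ) * M i j := mul_nonneg (by linarith) (hpos i j)
    have h3 : (0:ℝ) ≤ if i = j then (1:ℝ) else 0 := by positivity
    calc |(if i = j then (1 : ℝ) else 0) - (1 - γ) * M i j|
        ≤ |(if i = j then (1 : ℝ) else 0)| + |(1 - γ) * M i j| := abs_sub _ _
      _ = (if i = j then (1 : ℝ) else 0) + (1 - γ) * M i j := by
          rw [abs_of_nonneg h3, abs_of_nonneg h2]
  calc ∑ j, |(1 - (1 - γ) • M) i j|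
      ≤ ∑ j, ((if i = j then (1 : ℝ) else 0) + (1 - γ) * M i j) :=
        Finset.sum_le_sum fun j _ => this j
    _ = 1 + (1 - γ) * 1 := by
        rw [Finset.sum_add_distrib, ← Finset.mul_sum, hrow]
        simp
    _ ≤ 2 - γ := by linarith

/-- `1 - (1-γ)•M` is invertible (has unit determinant) for stochastic `M`. -/
lemma isUnit_det_A_aux (M : Matrix (Fin n) (Fin n) ℝ)
    (hpos : ∀ i j, 0 ≤ M i j) (hrow : ∀ i, ∑ j, M i j = 1)
    (γ : ℝ) (hγ0 : 0 < γ) (hγ1 : γ < 1) :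
    IsUnit (1 - (1 - γ) • M).det := by
  have hdet : (1 - (1 - γ) • M).det ≠ 0 := by
    apply det_ne_zero_of_sum_row_lt_diag
    intro k
    have hdiag_le : M k k ≤ 1 := by
      rw [← hrow k]
      exact Finset.single_le_sum (fun j _ => hpos k j) (Finset.mem_univ k)
    have hA : ∀ j, j ≠ k → (1 - (1 - γ) • M) k j = -((1 - γ) * M k j) := by
      intro j hj
      simp [Matrix.sub_apply, Matrix.one_apply, Ne.symm hj, smul_eq_mul]
    have hsum : ∑ j ∈ Finset.univ.erase k, ‖(1 - (1 - γ) • M) k j‖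
        = (1 - γ) * ∑ j ∈ Finset.univ.erase k, M k j := by
      rw [Finset.mul_sum]
      apply Finset.sum_congr rfl
      intro j hj
      rw [hA j (Finset.mem_erase.1 hj).1]
      rw [Real.norm_eq_abs, abs_neg,
        abs_of_nonneg (mul_nonneg (by linarith) (hpos k j))]
    have herase : ∑ j ∈ Finset.univ.erase k, M k j = 1 - M k k := by
      have := Finset.sum_erase_add Finset.univ (M k) (Finset.mem_univ k)
      rw [hrow k] at this
      linarith
    have hkk : (1 - (1 - γ) • M) k k = 1 - (1 - γ) * M k k := by
      simp [Matrix.sub_apply, Matrix.one_apply, smul_eq_mul]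
    rw [hsum, herase, hkk, Real.norm_eq_abs]
    have hmkk : 0 ≤ M k k := hpos k k
    have h1 : 0 < 1 - (1 - γ) * M k k := by nlinarith
    rw [abs_of_pos h1]
    nlinarith
  exact isUnit_iff_ne_zero.2 hdet

/-- Abstract ring identity. -/
lemma ring_identity_aux (A₁ A₂ B₁ B₂ M₁ M₂ : Matrix (Fin n) (Fin n) ℝ) (γ : ℝ)
    (hA₁ : A₁ = 1 - (1 - γ) • M₁) (hA₂ : A₂ = 1 - (1 - γ) • M₂)
    (h₁ : A₁ * B₁ = 1) (h₂ : B₂ * A₂ = 1) (hc₂ : M₂ * A₂ = A₂ * M₂) :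
    A₁ * (γ • (B₁ * M₁) - γ • (B₂ * M₂)) * A₂ = γ • (M₁ - M₂) := by
  have h3 : M₁ * A₂ - A₁ * M₂ = M₁ - M₂ := by
    rw [hA₁, hA₂]
    simp only [mul_sub, sub_mul, mul_one, one_mul, Matrix.mul_smul, Matrix.smul_mul]
    abel
  simp only [mul_sub, sub_mul, smul_mul_assoc, mul_smul_comm, mul_assoc]
  rw [hc₂, ← mul_assoc B₂ A₂ M₂, h₂, one_mul, ← mul_assoc A₁ B₁ _, h₁, one_mul,
    ← smul_sub, ← h3]

end aux

/-- lower bound for pseudo-copy differences: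
`‖P_γ(Π₁) − P_γ(Π₂)‖_∞ ≥ (γ/(2−γ)²)·‖Π₁ − Π₂‖_∞`. -/
theorem pseudo_copy_diff_lower {n : ℕ} (M₁ M₂ : Matrix (Fin n) (Fin n) ℝ)
    (hpos₁ : ∀ i j, 0 ≤ M₁ i j) (hrow₁ : ∀ i, ∑ j, M₁ i j = 1)
    (hpos₂ : ∀ i j, 0 ≤ M₂ i j) (hrow₂ : ∀ i, ∑ j, M₂ i j = 1)
    (γ : ℝ) (hγ0 : 0 < γ) (hγ1 : γ < 1) :
    (γ / (2 - γ) ^ 2) * rowNorm (M₁ - M₂) ≤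
      rowNorm (pseudoCopy γ M₁ - pseudoCopy γ M₂) := by
  have hΔnn : 0 ≤ rowNorm (pseudoCopy γ M₁ - pseudoCopy γ M₂) := rowNorm_nonneg_aux _
  have h2γ : (0:ℝ) < 2 - γ := by linarith
  have hsq : (0:ℝ) < (2 - γ) ^ 2 := by positivity
  cases isEmpty_or_nonempty (Fin n) with
  | inl h =>
    rw [rowNorm_empty_aux h, mul_zero]
    exact hΔnn
  | inr hne =>
    have hu₁ := isUnit_det_A_aux M₁ hpos₁ hrow₁ γ hγ0 hγ1
    have hu₂ := isUnit_det_A_aux M₂ hpos₂ hrow₂ γ hγ0 hγ1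
    have hcomm₂ : M₂ * (1 - (1 - γ) • M₂) = (1 - (1 - γ) • M₂) * M₂ := by
      simp only [mul_sub, sub_mul, mul_one, one_mul, Matrix.mul_smul, Matrix.smul_mul]
    have hid : (1 - (1 - γ) • M₁) * (pseudoCopy γ M₁ - pseudoCopy γ M₂) *
        (1 - (1 - γ) • M₂) = γ • (M₁ - M₂) := by
      have := ring_identity_aux (1 - (1 - γ) • M₁) (1 - (1 - γ) • M₂)
        (1 - (1 - γ) • M₁)⁻¹ (1 - (1 - γ) • M₂)⁻¹ M₁ M₂ γ rfl rfl
        (Matrix.mul_nonsing_inv _ hu₁) (Matrix.nonsing_inv_mul _ hu₂) hcomm₂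
      simpa [pseudoCopy] using this
    have hA₂row : ∀ k, ∑ j, |(1 - (1 - γ) • M₂) k j| ≤ 2 - γ :=
      rowSum_A_le_aux M₂ hpos₂ hrow₂ γ hγ1
    have hΔA₂ : ∀ k, ∑ j, |((pseudoCopy γ M₁ - pseudoCopy γ M₂) * (1 - (1 - γ) • M₂)) k j|
        ≤ rowNorm (pseudoCopy γ M₁ - pseudoCopy γ M₂) * (2 - γ) := fun k =>
      le_trans (rowSum_mul_le_aux _ _ (2 - γ) hA₂row k)
        (mul_le_mul_of_nonneg_right (le_rowNorm_aux _ k) (le_of_lt h2γ))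
    have hkey : ∀ i, γ * ∑ j, |(M₁ - M₂) i j|
        ≤ (2 - γ) ^ 2 * rowNorm (pseudoCopy γ M₁ - pseudoCopy γ M₂) := by
      intro i
      have hγsum : γ * ∑ j, |(M₁ - M₂) i j|
          = ∑ j, |((1 - (1 - γ) • M₁) * ((pseudoCopy γ M₁ - pseudoCopy γ M₂) *
              (1 - (1 - γ) • M₂))) i j| := by
        rw [← mul_assoc, hid, Finset.mul_sum]
        apply Finset.sum_congr rfl
        intro j _
        rw [Matrix.smul_apply, smul_eq_mul, abs_mul, abs_of_pos hγ0]
      rw [hγsum]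
      calc ∑ j, |((1 - (1 - γ) • M₁) * ((pseudoCopy γ M₁ - pseudoCopy γ M₂) *
              (1 - (1 - γ) • M₂))) i j|
          ≤ (∑ k, |(1 - (1 - γ) • M₁) i k|) *
              (rowNorm (pseudoCopy γ M₁ - pseudoCopy γ M₂) * (2 - γ)) :=
            rowSum_mul_le_aux _ _ _ hΔA₂ i
        _ ≤ (2 - γ) * (rowNorm (pseudoCopy γ M₁ - pseudoCopy γ M₂) * (2 - γ)) :=
            mul_le_mul_of_nonneg_right (rowSum_A_le_aux M₁ hpos₁ hrow₁ γ hγ1 i)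
              (mul_nonneg hΔnn (le_of_lt h2γ))
        _ = (2 - γ) ^ 2 * rowNorm (pseudoCopy γ M₁ - pseudoCopy γ M₂) := by ring
    have hsup : rowNorm (M₁ - M₂)
        ≤ ((2 - γ) ^ 2 * rowNorm (pseudoCopy γ M₁ - pseudoCopy γ M₂)) / γ := by
      unfold rowNorm
      apply ciSup_le
      intro i
      rw [le_div_iff₀ hγ0]
      calc (∑ j, |(M₁ - M₂) i j|) * γ = γ * ∑ j, |(M₁ - M₂) i j| := by ring
        _ ≤ _ := hkey i
    calc (γ / (2 - γ) ^ 2) * rowNorm (M₁ - M₂)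
        ≤ (γ / (2 - γ) ^ 2) *
            (((2 - γ) ^ 2 * rowNorm (pseudoCopy γ M₁ - pseudoCopy γ M₂)) / γ) := by
          apply mul_le_mul_of_nonneg_left hsup
          positivity
      _ = rowNorm (pseudoCopy γ M₁ - pseudoCopy γ M₂) := by
          field_simp
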